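/- arXiv:2507.05889 — 2 statements merged into one kernel-verified Lean document; each statement's English description precedes it below -/
import Mathlib

section
/- Let k be a natural number and let D : (ℝ → ℝ) → ℝ be a linear functional on the real vector space of all functions from ℝ to ℝ, such that D(z ↦ z^{k+1} · g(z)) = 0 for every infinitely differentiable function g : ℝ → ℝ. Then for every infinitely differentiable function f : ℝ → ℝ, D(f) = ∑_{r=0}^{k} (f^{(r)}(0)/r!) · D(z ↦ z^r), where f^{(r)} denotes the r-th derivative of f. -/
private lemma deriv_smooth' {f : ℝ → ℝ} (hf : ContDiff ℝ (⊤ : ℕ∞) f) : ContDiff ℝ (⊤ : ℕ∞) (deriv f) := by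
  exact (contDiff_infty_iff_deriv.mp hf).2

private lemma param_int_smooth' : ∀ n : ℕ, ∀ φ : ℝ × ℝ → ℝ, ContDiff ℝ (⊤ : ℕ∞) φ →
    ContDiff ℝ n (fun x : ℝ => ∫ t in (0:ℝ)..1, φ (t, x)) := by
  intro n
  induction n with
  | zero =>
    intro φ hφ
    rw [Nat.cast_zero, contDiff_zero]
    exact intervalIntegral.continuous_parametric_intervalIntegral_of_continuous'
      (f := fun x t => φ (t, x)) (hφ.continuous.comp (continuous_snd.prodMk continuous_fst)) 0 1
  | succ n IH =>
    intro φ hφ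
    set φ₂ : ℝ × ℝ → ℝ := fun p => fderiv ℝ φ p ((0:ℝ), (1:ℝ)) with hφ₂
    have hφ₂s : ContDiff ℝ (⊤ : ℕ∞) φ₂ :=
      (hφ.fderiv_right (m := ((⊤ : ℕ∞) : WithTop ℕ∞)) (by simp)).clm_apply contDiff_const
    have hd : ∀ x₀ : ℝ, HasDerivAt (fun x : ℝ => ∫ t in (0:ℝ)..1, φ (t, x))
        (∫ t in (0:ℝ)..1, φ₂ (t, x₀)) x₀ := by
      intro x₀
      have hK : IsCompact (Set.Icc (0:ℝ) 1 ×ˢ Metric.closedBall x₀ 1) :=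
        isCompact_Icc.prod (isCompact_closedBall _ _)
      obtain ⟨C, hC⟩ := hK.exists_bound_of_continuousOn hφ₂s.continuous.continuousOn
      have hcont : ∀ x : ℝ, Continuous (fun t : ℝ => φ (t, x)) := fun x =>
        hφ.continuous.comp (continuous_id.prodMk continuous_const)
      have hcont2 : ∀ x : ℝ, Continuous (fun t : ℝ => φ₂ (t, x)) := fun x =>
        hφ₂s.continuous.comp (continuous_id.prodMk continuous_const)
      have hdiff : ∀ t x : ℝ, HasDerivAt (fun x : ℝ => φ (t, x)) (φ₂ (t, x)) x := by
        intro t x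
        have h1 : HasDerivAt (fun x : ℝ => (t, x)) ((0:ℝ), (1:ℝ)) x :=
          (hasDerivAt_const x t).prodMk (hasDerivAt_id x)
        exact ((hφ.differentiable (by simp)) (t, x)).hasFDerivAt.comp_hasDerivAt x h1
      have key := intervalIntegral.hasDerivAt_integral_of_dominated_loc_of_deriv_le
        (μ := MeasureTheory.volume) (a := 0) (b := 1)
        (F := fun x t => φ (t, x)) (F' := fun x t => φ₂ (t, x)) (x₀ := x₀) (bound := fun _ => C)
        (Metric.ball_mem_nhds x₀ one_pos)
        (Filter.Eventually.of_forall fun x => (hcont x).aestronglyMeasurable)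
        ((hcont x₀).intervalIntegrable 0 1)
        ((hcont2 x₀).aestronglyMeasurable)
        (Filter.Eventually.of_forall fun t ht x hx => hC (t, x)
          ⟨Set.Ioc_subset_Icc_self (by rw [Set.uIoc_of_le zero_le_one] at ht; exact ht),
            Metric.ball_subset_closedBall hx⟩)
        intervalIntegrable_const
        (Filter.Eventually.of_forall fun t _ x _ => hdiff t x)
      exact key.2
    have hderiv : deriv (fun x : ℝ => ∫ t in (0:ℝ)..1, φ (t, x))
        = fun x => ∫ t in (0:ℝ)..1, φ₂ (t, x) := funext fun x => (hd x).deriv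
    rw [Nat.cast_succ, contDiff_succ_iff_deriv]
    refine ⟨fun x => (hd x).differentiableAt, by simp, ?_⟩
    rw [hderiv]
    exact IH φ₂ hφ₂s

private lemma exists_div' (f : ℝ → ℝ) (hf : ContDiff ℝ (⊤ : ℕ∞) f) (h0 : f 0 = 0) :
    ∃ g : ℝ → ℝ, ContDiff ℝ (⊤ : ℕ∞) g ∧ ∀ z, f z = z * g z := by
  refine ⟨fun z => ∫ t in (0:ℝ)..1, deriv f (t * z), ?_, ?_⟩
  · exact contDiff_infty.2 fun n => param_int_smooth' n (fun p => deriv f (p.1 * p.2))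
      ((deriv_smooth' hf).comp (contDiff_fst.mul contDiff_snd))
  · intro z
    rcases eq_or_ne z 0 with rfl | hz
    · simp [h0]
    · have hdf : ∀ x, HasDerivAt f (deriv f x) x := fun x =>
        ((hf.differentiable (by simp)) x).hasDerivAt
      have h1 : ∫ t in (0:ℝ)..1, deriv f (t * z) = z⁻¹ * (f z - f 0) := by
        rw [intervalIntegral.integral_comp_mul_right (deriv f) hz, zero_mul, one_mul,
          intervalIntegral.integral_eq_sub_of_hasDerivAt (fun x _ => hdf x)
            ((deriv_smooth' hf).continuous.intervalIntegrable _ _), smul_eq_mul]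
      show f z = z * ∫ t in (0:ℝ)..1, deriv f (t * z)
      rw [h1, h0, sub_zero, ← mul_assoc, mul_inv_cancel₀ hz, one_mul]

private lemma itd_add' {f g : ℝ → ℝ} (hf : ContDiff ℝ (⊤ : ℕ∞) f) (hg : ContDiff ℝ (⊤ : ℕ∞) g)
    (n : ℕ) (z : ℝ) :
    iteratedDeriv n (fun z => f z + g z) z = iteratedDeriv n f z + iteratedDeriv n g z := by
  have h := iteratedDerivWithin_add (Set.mem_univ z) uniqueDiffOn_univ
    ((hf.of_le (by exact_mod_cast le_top)).contDiffOn (s := Set.univ) (n := (n : ℕ∞)) z (Set.mem_univ z))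
    ((hg.of_le (by exact_mod_cast le_top)).contDiffOn (s := Set.univ) (n := (n : ℕ∞)) z (Set.mem_univ z))
  simpa [iteratedDerivWithin_univ, Pi.add_def] using h

private lemma itd_const_add' {f : ℝ → ℝ} (c : ℝ) (n : ℕ) (hn : 0 < n) (z : ℝ) :
    iteratedDeriv n (fun z => c + f z) z = iteratedDeriv n f z := by
  have h := iteratedDerivWithin_const_add (s := Set.univ) (x := z) (f := f) hn c
  simpa [iteratedDerivWithin_univ] using h

private lemma itd_id_mul' (n : ℕ) : ∀ (h : ℝ → ℝ), ContDiff ℝ (⊤ : ℕ∞) h → ∀ z : ℝ,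
    iteratedDeriv n (fun z => z * h z) z
      = n * iteratedDeriv (n - 1) h z + z * iteratedDeriv n h z := by
  induction n with
  | zero => intro h _ z; simp
  | succ n IH =>
    intro h hh z
    have hdiff : ∀ y : ℝ, HasDerivAt (fun z => z * h z) (h y + y * deriv h y) y := by
      intro y
      have := (hasDerivAt_id y).mul ((hh.differentiable (by simp) y).hasDerivAt)
      simpa [one_mul, Pi.mul_def] using this
    have hder : deriv (fun z => z * h z) = fun y => h y + y * deriv h y :=
      funext fun y => (hdiff y).deriv
    have hmul : ContDiff ℝ (⊤ : ℕ∞) (fun y : ℝ => y * deriv h y) :=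
      contDiff_id.mul (deriv_smooth' hh)
    rw [iteratedDeriv_succ', hder, itd_add' hh hmul n z, IH (deriv h) (deriv_smooth' hh) z]
    rcases Nat.eq_zero_or_pos n with rfl | hn
    · simp [iteratedDeriv_one, iteratedDeriv_succ']
    · have e1 : iteratedDeriv (n - 1) (deriv h) = iteratedDeriv n h := by
        conv_rhs => rw [show n = (n - 1) + 1 from (Nat.succ_pred_eq_of_pos hn).symm]
        rw [iteratedDeriv_succ']
      have e2 : iteratedDeriv n (deriv h) = iteratedDeriv (n + 1) h :=
        iteratedDeriv_succ'.symm
      rw [e1, e2]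
      push_cast
      ring

/-- A linear functional on functions `ℝ → ℝ` that annihilates every smooth
function divisible by `z^(k+1)` is determined, on smooth functions, by the
`k`-jet at `0`. -/
theorem linear_functional_jet_determined (k : ℕ)
    (D : (ℝ → ℝ) →ₗ[ℝ] ℝ)
    (hD : ∀ g : ℝ → ℝ, ContDiff ℝ (⊤ : ℕ∞) g → D (fun z : ℝ => z ^ (k + 1) * g z) = 0)
    (f : ℝ → ℝ) (hf : ContDiff ℝ (⊤ : ℕ∞) f) :
    D f = ∑ r ∈ Finset.range (k + 1),
      (iteratedDeriv r f 0 / (Nat.factorial r : ℝ)) * D (fun z : ℝ => z ^ r) := by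
  have claim : ∀ m : ℕ, m ≤ k + 1 → ∀ g : ℝ → ℝ, ContDiff ℝ (⊤ : ℕ∞) g →
      D (fun z : ℝ => z ^ (k + 1 - m) * g z)
        = ∑ r ∈ Finset.range m,
            (iteratedDeriv r g 0 / (Nat.factorial r : ℝ)) * D (fun z : ℝ => z ^ (k + 1 - m + r)) := by
    intro m
    induction m with
    | zero => intro _ g hg; simpa using hD g hg
    | succ m IH =>
      intro hm g hg
      have hm' : m ≤ k := by omega
      obtain ⟨h, hh, hgh⟩ := exists_div' (fun z => g z - g 0)
        (hg.sub contDiff_const) (by simp)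
      have hgz : ∀ z, g z = g 0 + z * h z := fun z => by have := hgh z; linarith
      have hgfun : g = fun z => g 0 + z * h z := funext hgz
      have hiter : ∀ r : ℕ, iteratedDeriv (r + 1) g 0 = (r + 1) * iteratedDeriv r h 0 := by
        intro r
        conv_lhs => rw [hgfun]
        rw [itd_const_add' (g 0) (r + 1) (Nat.succ_pos r) 0,
          itd_id_mul' (r + 1) h hh 0]
        simp
      have hfun : (fun z : ℝ => z ^ (k + 1 - (m + 1)) * g z)
          = (g 0) • (fun z : ℝ => z ^ (k - m)) + (fun z : ℝ => z ^ (k + 1 - m) * h z) := by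
        funext z
        have e : k + 1 - m = (k - m) + 1 := by omega
        have e2 : k + 1 - (m + 1) = k - m := by omega
        simp only [Pi.add_apply, Pi.smul_apply, smul_eq_mul, e, e2, pow_succ, hgz z]
        ring
      rw [hfun, map_add, map_smul, IH (by omega) h hh]
      rw [Finset.sum_range_succ']
      have hterm : ∀ r ∈ Finset.range m,
          (iteratedDeriv (r + 1) g 0 / (Nat.factorial (r + 1) : ℝ))
              * D (fun z : ℝ => z ^ (k + 1 - (m + 1) + (r + 1)))
            = (iteratedDeriv r h 0 / (Nat.factorial r : ℝ))
              * D (fun z : ℝ => z ^ (k + 1 - m + r)) := by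
        intro r _
        have e : k + 1 - (m + 1) + (r + 1) = k + 1 - m + r := by omega
        rw [e, hiter r, Nat.factorial_succ]
        push_cast
        rw [mul_div_mul_left _ _ (by positivity : ((r : ℝ) + 1) ≠ 0)]
      rw [Finset.sum_congr rfl hterm]
      have e0 : (iteratedDeriv 0 g 0 / (Nat.factorial 0 : ℝ))
          * D (fun z : ℝ => z ^ (k + 1 - (m + 1) + 0))
          = g 0 * D (fun z : ℝ => z ^ (k - m)) := by
        have e2 : k + 1 - (m + 1) + 0 = k - m := by omega
        simp [e2, iteratedDeriv_zero]
      rw [e0]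
      rw [smul_eq_mul]
      ring
  have := claim (k + 1) le_rfl f hf
  have e : (fun z : ℝ => z ^ (k + 1 - (k + 1)) * f z) = f := by
    funext z; simp
  rw [e] at this
  rw [this]
  apply Finset.sum_congr rfl
  intro r _
  have e2 : k + 1 - (k + 1) + r = r := by omega
  rw [e2]
end

section
/- Let k be a natural number. For each s ∈ {0,…,k} let κ_s : ℝ³ → ℝ be bounded and continuous. Let ψ : ℝ → ℝ be infinitely differentiable, Lebesgue integrable with ∫_ℝ ψ(x) dx = 1, with ψ(0) = 1 and ψ^{(m)}(0) = 0 for all m ≥ 1. Fix r ∈ {0,…,k} and v = (v₁,v₂,v₃) ∈ ℝ³, and for ε > 0 define the test field T_ε : ℝ³ × ℝ → ℝ by T_ε(u,z) = (ε³ r!)^{-1} · ψ((u₁−v₁)/ε) · ψ((u₂−v₂)/ε) · ψ((u₃−v₃)/ε) · z^r · ψ(z). Then for every ε > 0 and every s ∈ {0,…,k} the function u′ ↦ κ_s(u′) · (∂_z^s T_ε)(u′,0) is Lebesgue integrable on ℝ³ (where ∂_z^s T_ε(u′,0) denotes the s-th derivative of z ↦ T_ε(u′,z) at z = 0), and the limit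 as ε → 0⁺ of ∑_{s=0}^{k} ∫_{ℝ³} κ_s(u′) · (∂_z^s T_ε)(u′,0) du′ equals κ_r(v). -/
open MeasureTheory Filter

/-- The scaled test field `T_ε` used to extract the boundary-condition
kernels: `T_ε (u, z) = (ε³ r!)⁻¹ ψ((u₁−v₁)/ε) ψ((u₂−v₂)/ε) ψ((u₃−v₃)/ε)
z^r ψ(z)`. -/
noncomputable def testField (ψ : ℝ → ℝ) (r : ℕ) (v : Fin 3 → ℝ) (ε : ℝ) :
    (Fin 3 → ℝ) × ℝ → ℝ :=
  fun p =>
    (ε ^ 3 * (Nat.factorial r : ℝ))⁻¹ *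
      ψ ((p.1 0 - v 0) / ε) * ψ ((p.1 1 - v 1) / ε) * ψ ((p.1 2 - v 2) / ε) *
      p.2 ^ r * ψ p.2

private lemma itd_const_mul (c : ℝ) {f : ℝ → ℝ} (hf : ContDiff ℝ (⊤ : ℕ∞) f) (n : ℕ) (x : ℝ) :
    iteratedDeriv n (fun z => c * f z) x = c * iteratedDeriv n f x := by
  simp_rw [← iteratedDerivWithin_univ]
  exact iteratedDerivWithin_const_mul (Set.mem_univ x) uniqueDiffOn_univ c
    ((hf.of_le (by exact_mod_cast le_top)).contDiffWithinAt)

/-- Leibniz rule for iterated derivatives of a product of smooth functions. -/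
private lemma itd_leibniz {f g : ℝ → ℝ} (hf : ContDiff ℝ (⊤ : ℕ∞) f) (hg : ContDiff ℝ (⊤ : ℕ∞) g) (n : ℕ) :
    iteratedDeriv n (fun z => f z * g z) = fun x =>
      ∑ i ∈ Finset.range (n + 1),
        (n.choose i : ℝ) * (iteratedDeriv i f x * iteratedDeriv (n - i) g x) := by
  have hdf : ∀ m : ℕ, Differentiable ℝ (iteratedDeriv m f) := fun m =>
    hf.differentiable_iteratedDeriv m (by exact_mod_cast lt_top_iff_ne_top.2 (by simp))
  have hdg : ∀ m : ℕ, Differentiable ℝ (iteratedDeriv m g) := fun m =>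
    hg.differentiable_iteratedDeriv m (by exact_mod_cast lt_top_iff_ne_top.2 (by simp))
  induction n with
  | zero => funext x; simp
  | succ n ih =>
    funext x
    rw [iteratedDeriv_succ, ih]
    rw [deriv_fun_sum (A := fun i y => (n.choose i : ℝ) * (iteratedDeriv i f y * iteratedDeriv (n - i) g y)) (fun i _ => (((hdf i x).mul (hdg (n - i) x)).const_mul _))]
    have hterm : ∀ i ∈ Finset.range (n + 1),
        deriv (fun y => (n.choose i : ℝ) * (iteratedDeriv i f y * iteratedDeriv (n - i) g y)) x
        = (n.choose i : ℝ) * (iteratedDeriv (i + 1) f x * iteratedDeriv (n - i) g x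
            + iteratedDeriv i f x * iteratedDeriv (n + 1 - i) g x) := by
      intro i hi
      have hin : i ≤ n := Nat.lt_succ_iff.1 (Finset.mem_range.1 hi)
      rw [deriv_const_mul _ ((hdf i x).fun_mul (hdg (n - i) x)),
        deriv_fun_mul (hdf i x) (hdg (n - i) x), ← iteratedDeriv_succ, ← iteratedDeriv_succ]
      have : n - i + 1 = n + 1 - i := by omega
      rw [this]
    rw [Finset.sum_congr rfl hterm]
    -- now the combinatorial identity
    set a : ℕ → ℝ := fun i => iteratedDeriv i f x with ha
    set b : ℕ → ℝ := fun j => iteratedDeriv j g x with hb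
    have key : ∑ i ∈ Finset.range (n + 1),
          (n.choose i : ℝ) * (a (i + 1) * b (n - i) + a i * b (n + 1 - i))
        = ∑ i ∈ Finset.range (n + 2), ((n + 1).choose i : ℝ) * (a i * b (n + 1 - i)) := by
      simp only [mul_add, Finset.sum_add_distrib]
      rw [Finset.sum_range_succ' (fun i => ((n + 1).choose i : ℝ) * (a i * b (n + 1 - i)))]
      have e1 : ∑ i ∈ Finset.range (n + 1),
            ((n + 1).choose (i + 1) : ℝ) * (a (i + 1) * b (n + 1 - (i + 1)))
          = ∑ i ∈ Finset.range (n + 1), ((n.choose i : ℝ) * (a (i + 1) * b (n - i))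
              + (n.choose (i + 1) : ℝ) * (a (i + 1) * b (n - i))) := by
        refine Finset.sum_congr rfl fun i _ => ?_
        have : n + 1 - (i + 1) = n - i := by omega
        rw [this, Nat.choose_succ_succ]
        push_cast
        ring
      rw [e1, Finset.sum_add_distrib]
      have e2 : ∑ i ∈ Finset.range (n + 1), (n.choose i : ℝ) * (a i * b (n + 1 - i))
          = ∑ i ∈ Finset.range (n + 1), (n.choose (i + 1) : ℝ) * (a (i + 1) * b (n - i))
            + a 0 * b (n + 1) := by
        rw [Finset.sum_range_succ' (fun i => (n.choose i : ℝ) * (a i * b (n + 1 - i)))]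
        rw [Finset.sum_range_succ (fun i => (n.choose (i + 1) : ℝ) * (a (i + 1) * b (n - i)))]
        simp only [Nat.choose_zero_right, Nat.cast_one, one_mul, Nat.sub_zero,
          Nat.choose_succ_self, Nat.cast_zero, zero_mul, add_zero]
        congr 1
        refine Finset.sum_congr rfl fun i hi => ?_
        have : n + 1 - (i + 1) = n - i := by omega
        rw [this]
      rw [e2]
      simp only [Nat.choose_zero_right, Nat.cast_one, one_mul, Nat.sub_zero]
      ring
    rw [key]

private lemma itd_pow (r : ℕ) : ∀ i : ℕ, iteratedDeriv i (fun z : ℝ => z ^ r)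
    = fun z => (r.descFactorial i : ℝ) * z ^ (r - i) := by
  intro i
  induction i with
  | zero => funext z; simp
  | succ i ih =>
    funext z
    rw [iteratedDeriv_succ, ih]
    rw [deriv_const_mul _ (differentiable_pow _ z)]
    rw [deriv_pow_field]
    rw [Nat.descFactorial_succ]
    have : r - i - 1 = r - (i + 1) := by omega
    rw [← this]
    push_cast
    ring

private lemma itd_pow_zero (r i : ℕ) :
    iteratedDeriv i (fun z : ℝ => z ^ r) 0 = if i = r then (r.factorial : ℝ) else 0 := by
  rw [itd_pow]
  show (r.descFactorial i : ℝ) * (0 : ℝ) ^ (r - i) = _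
  rcases lt_trichotomy i r with h | h | h
  · rw [if_neg h.ne, zero_pow (Nat.sub_ne_zero_of_lt h), mul_zero]
  · subst h
    rw [if_pos rfl, Nat.sub_self, pow_zero, mul_one, Nat.descFactorial_self]
  · rw [if_neg h.ne', Nat.descFactorial_eq_zero_iff_lt.2 h]
    simp

private lemma itd_eval {ψ : ℝ → ℝ} (hψ : ContDiff ℝ (⊤ : ℕ∞) ψ) (hψ0 : ψ 0 = 1)
    (hψd : ∀ m : ℕ, 1 ≤ m → iteratedDeriv m ψ 0 = 0) (r s : ℕ) :
    iteratedDeriv s (fun z : ℝ => z ^ r * ψ z) 0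
      = if s = r then (r.factorial : ℝ) else 0 := by
  rw [itd_leibniz (f := fun z : ℝ => z ^ r) (g := ψ)
    (by exact contDiff_id.pow r) hψ]
  beta_reduce
  by_cases hs : s = r
  · subst hs
    rw [if_pos rfl]
    rw [Finset.sum_eq_single_of_mem s (Finset.self_mem_range_succ s)]
    · rw [itd_pow_zero, if_pos rfl, Nat.choose_self, Nat.sub_self, iteratedDeriv_zero, hψ0]
      push_cast; ring
    · intro i hi hne
      rw [itd_pow_zero, if_neg hne]; ring
  · rw [if_neg hs]
    refine Finset.sum_eq_zero fun i hi => ?_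
    rw [itd_pow_zero]
    by_cases hir : i = r
    · subst hir
      have hile : i ≤ s := Nat.lt_succ_iff.1 (Finset.mem_range.1 hi)
      have : 1 ≤ s - i := by omega
      rw [hψd _ this]; ring
    · rw [if_neg hir]; ring

/-- Kernel extraction: the boundary-condition functional
`f ↦ ∑_{s=0}^{k} ∫ κ_s(u′) ∂_z^s f(u′,0) du′`, with bounded continuous
kernels, evaluated on the scaled test field `T_ε`, recovers `κ_r v` in the
limit `ε → 0⁺`. -/
theorem kernel_extraction (k : ℕ) (κ : ℕ → (Fin 3 → ℝ) → ℝ)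
    (hκb : ∀ s, s ≤ k → ∃ C : ℝ, ∀ u : Fin 3 → ℝ, |κ s u| ≤ C)
    (hκc : ∀ s, s ≤ k → Continuous (κ s))
    (ψ : ℝ → ℝ) (hψsmooth : ContDiff ℝ (⊤ : ℕ∞) ψ) (hψint : Integrable ψ)
    (hψ1 : ∫ x : ℝ, ψ x = 1) (hψ0 : ψ 0 = 1)
    (hψd : ∀ m : ℕ, 1 ≤ m → iteratedDeriv m ψ 0 = 0)
    (r : ℕ) (hr : r ≤ k) (v : Fin 3 → ℝ) :
    (∀ ε : ℝ, 0 < ε → ∀ s : ℕ, s ≤ k →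
      Integrable (fun u' : Fin 3 → ℝ =>
        κ s u' * iteratedDeriv s (fun z : ℝ => testField ψ r v ε (u', z)) 0)) ∧
    Tendsto (fun ε : ℝ =>
        ∑ s ∈ Finset.range (k + 1), ∫ u' : Fin 3 → ℝ,
          κ s u' * iteratedDeriv s (fun z : ℝ => testField ψ r v ε (u', z)) 0)
      (nhdsWithin 0 (Set.Ioi 0)) (nhds (κ r v)) := by
  have hψcont : Continuous ψ := hψsmooth.continuous
  -- value of the iterated derivative at 0
  have hD : ∀ ε : ℝ, 0 < ε → ∀ s : ℕ, ∀ u' : Fin 3 → ℝ,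
      iteratedDeriv s (fun z : ℝ => testField ψ r v ε (u', z)) 0
        = if s = r then
            (ε ^ 3)⁻¹ * (ψ ((u' 0 - v 0) / ε) * ψ ((u' 1 - v 1) / ε) * ψ ((u' 2 - v 2) / ε))
          else 0 := by
    intro ε hε s u'
    have hfun : (fun z : ℝ => testField ψ r v ε (u', z))
        = fun z => ((ε ^ 3 * (Nat.factorial r : ℝ))⁻¹ * ψ ((u' 0 - v 0) / ε)
            * ψ ((u' 1 - v 1) / ε) * ψ ((u' 2 - v 2) / ε)) * (z ^ r * ψ z) := by
      funext z; simp only [testField]; ring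
    rw [hfun, itd_const_mul _ (f := fun z : ℝ => z ^ r * ψ z)
      (by exact (contDiff_id.pow r).mul hψsmooth) s 0,
      itd_eval hψsmooth hψ0 hψd]
    by_cases hs : s = r
    · rw [if_pos hs, if_pos hs]
      have hfac : (Nat.factorial r : ℝ) ≠ 0 := Nat.cast_ne_zero.2 r.factorial_ne_zero
      field_simp
    · rw [if_neg hs, if_neg hs, mul_zero]
  -- integrability of the scaled kernel
  have hGint : ∀ ε : ℝ, 0 < ε → Integrable (fun u : Fin 3 → ℝ =>
      (ε ^ 3)⁻¹ * (ψ ((u 0 - v 0) / ε) * ψ ((u 1 - v 1) / ε) * ψ ((u 2 - v 2) / ε))) := by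
    intro ε hε
    have h1 : Integrable (fun u : Fin 3 → ℝ =>
        ∏ i : Fin 3, ψ ((u i - v i) / ε)) := by
      exact Integrable.fin_nat_prod (f := fun i x => ψ ((x - v i) / ε))
        (fun i => (hψint.comp_div hε.ne').comp_sub_right (v i))
    refine (h1.const_mul ((ε ^ 3)⁻¹)).congr (Filter.Eventually.of_forall fun u => ?_)
    simp only [Fin.prod_univ_three]
  obtain ⟨C, hC⟩ := hκb r hr
  have hint : ∀ ε : ℝ, 0 < ε → ∀ s : ℕ, s ≤ k →
      Integrable (fun u' : Fin 3 → ℝ =>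
        κ s u' * iteratedDeriv s (fun z : ℝ => testField ψ r v ε (u', z)) 0) := by
    intro ε hε s hs
    by_cases hsr : s = r
    · have heq : (fun u' : Fin 3 → ℝ =>
          κ s u' * iteratedDeriv s (fun z : ℝ => testField ψ r v ε (u', z)) 0)
          = fun u' => κ s u' * ((ε ^ 3)⁻¹ *
            (ψ ((u' 0 - v 0) / ε) * ψ ((u' 1 - v 1) / ε) * ψ ((u' 2 - v 2) / ε))) := by
        funext u'; rw [hD ε hε, if_pos hsr]
      rw [heq, hsr]
      exact (hGint ε hε).bdd_mul ((hκc r hr).aestronglyMeasurable)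
        (Filter.Eventually.of_forall fun u => by simpa using hC u)
    · have heq : (fun u' : Fin 3 → ℝ =>
          κ s u' * iteratedDeriv s (fun z : ℝ => testField ψ r v ε (u', z)) 0)
          = fun _ => (0 : ℝ) := by
        funext u'; rw [hD ε hε, if_neg hsr, mul_zero]
      rw [heq]
      exact integrable_zero _ _ _
  refine ⟨hint, ?_⟩
  -- the product test function
  set φ : (Fin 3 → ℝ) → ℝ := fun y => ψ (y 0) * ψ (y 1) * ψ (y 2) with hφ
  have hφcont : Continuous φ :=
    (((hψcont.comp (continuous_apply 0)).mul (hψcont.comp (continuous_apply 1))).mul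
      (hψcont.comp (continuous_apply 2)))
  have hφprod : ∀ y : Fin 3 → ℝ, φ y = ∏ i : Fin 3, ψ (y i) := by
    intro y; rw [Fin.prod_univ_three]
  have hφint : Integrable φ := by
    have : Integrable (fun y : Fin 3 → ℝ => ∏ i : Fin 3, ψ (y i)) :=
      Integrable.fin_nat_prod (f := fun _ x => ψ x) (fun _ => hψint)
    exact this.congr (Filter.Eventually.of_forall fun y => (hφprod y).symm)
  have hφ1 : ∫ y : Fin 3 → ℝ, φ y = 1 := by
    have : ∫ y : Fin 3 → ℝ, φ y = ∫ y : Fin 3 → ℝ, ∏ i : Fin 3, ψ (y i) := by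
      congr 1; funext y; exact hφprod y
    rw [this, MeasureTheory.volume_pi, MeasureTheory.integral_fin_nat_prod_eq_prod (f := fun _ x => ψ x)]
    simp [hψ1]
  -- change of variables: for each ε > 0 the sum equals a mollified integral
  have key : ∀ ε : ℝ, 0 < ε →
      (∑ s ∈ Finset.range (k + 1), ∫ u' : Fin 3 → ℝ,
          κ s u' * iteratedDeriv s (fun z : ℝ => testField ψ r v ε (u', z)) 0)
        = ∫ y : Fin 3 → ℝ, κ r (v + ε • y) * φ y := by
    intro ε hε
    have hε3 : (ε : ℝ) ^ 3 ≠ 0 := pow_ne_zero _ hε.ne'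
    rw [Finset.sum_eq_single_of_mem r (Finset.mem_range.2 (Nat.lt_succ_of_le hr))]
    · -- the main term
      have heq : (fun u' : Fin 3 → ℝ =>
          κ r u' * iteratedDeriv r (fun z : ℝ => testField ψ r v ε (u', z)) 0)
          = fun u => κ r u * ((ε ^ 3)⁻¹ *
            (ψ ((u 0 - v 0) / ε) * ψ ((u 1 - v 1) / ε) * ψ ((u 2 - v 2) / ε))) := by
        funext u; rw [hD ε hε, if_pos rfl]
      rw [heq]
      -- translate
      rw [← MeasureTheory.integral_add_left_eq_self (μ := (volume : Measure (Fin 3 → ℝ)))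
        (f := fun u : Fin 3 → ℝ => κ r u * ((ε ^ 3)⁻¹ *
            (ψ ((u 0 - v 0) / ε) * ψ ((u 1 - v 1) / ε) * ψ ((u 2 - v 2) / ε)))) v]
      have h2 : (fun w : Fin 3 → ℝ => κ r (v + w) * ((ε ^ 3)⁻¹ *
            (ψ (((v + w) 0 - v 0) / ε) * ψ (((v + w) 1 - v 1) / ε) * ψ (((v + w) 2 - v 2) / ε))))
          = fun w : Fin 3 → ℝ => κ r (v + w) * ((ε ^ 3)⁻¹ *
            (ψ (w 0 / ε) * ψ (w 1 / ε) * ψ (w 2 / ε))) := by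
        funext w
        simp [Pi.add_apply, add_sub_cancel_left]
      rw [h2]
      -- scale
      have h3 := MeasureTheory.Measure.integral_comp_smul (μ := (volume : Measure (Fin 3 → ℝ)))
        (f := fun w : Fin 3 → ℝ => κ r (v + w) * ((ε ^ 3)⁻¹ *
            (ψ (w 0 / ε) * ψ (w 1 / ε) * ψ (w 2 / ε)))) ε
      rw [Module.finrank_fin_fun] at h3
      have h4 : (fun y : Fin 3 → ℝ => κ r (v + ε • y) * ((ε ^ 3)⁻¹ *
            (ψ ((ε • y) 0 / ε) * ψ ((ε • y) 1 / ε) * ψ ((ε • y) 2 / ε))))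
          = fun y : Fin 3 → ℝ => κ r (v + ε • y) * ((ε ^ 3)⁻¹ * φ y) := by
        funext y
        have : ∀ i : Fin 3, (ε • y) i / ε = y i := fun i => by
          simp [Pi.smul_apply, smul_eq_mul, mul_div_cancel_left₀ _ hε.ne']
        rw [this 0, this 1, this 2]
      rw [h4] at h3
      have h5 : ∫ y : Fin 3 → ℝ, κ r (v + ε • y) * ((ε ^ 3)⁻¹ * φ y)
          = (ε ^ 3)⁻¹ * ∫ y : Fin 3 → ℝ, κ r (v + ε • y) * φ y := by
        rw [← MeasureTheory.integral_const_mul]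
        congr 1; funext y; ring
      rw [h5] at h3
      -- h3 : (ε^3)⁻¹ * ∫ ... = |(ε^3)⁻¹| • ∫ w, (original)
      have habs : |(ε ^ 3)⁻¹| = (ε ^ 3)⁻¹ := abs_of_pos (by positivity)
      rw [habs, smul_eq_mul] at h3
      have := mul_left_cancel₀ (inv_ne_zero hε3) h3
      rw [← this]
    · intro s hs hsr
      have heq : (fun u' : Fin 3 → ℝ =>
          κ s u' * iteratedDeriv s (fun z : ℝ => testField ψ r v ε (u', z)) 0)
          = fun _ => (0 : ℝ) := by
        funext u'; rw [hD ε hε, if_neg hsr, mul_zero]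
      rw [heq, integral_zero]
  -- dominated convergence
  have hC0 : 0 ≤ C := le_trans (abs_nonneg _) (hC v)
  have hlim : Tendsto (fun ε : ℝ => ∫ y : Fin 3 → ℝ, κ r (v + ε • y) * φ y)
      (nhdsWithin 0 (Set.Ioi 0)) (nhds (κ r v)) := by
    have hκrv : ∫ y : Fin 3 → ℝ, κ r v * φ y = κ r v := by
      rw [MeasureTheory.integral_const_mul, hφ1, mul_one]
    rw [← hκrv]
    apply MeasureTheory.tendsto_integral_filter_of_dominated_convergence
      (fun y => C * |φ y|)
    · filter_upwards with ε
      have hcont : Continuous fun y : Fin 3 → ℝ => κ r (v + ε • y) * φ y :=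
        ((hκc r hr).comp (continuous_const.add (continuous_id.const_smul ε))).mul hφcont
      exact hcont.aestronglyMeasurable
    · filter_upwards with ε
      filter_upwards with y
      have : ‖κ r (v + ε • y) * φ y‖ = |κ r (v + ε • y)| * |φ y| := abs_mul _ _
      rw [this]
      exact mul_le_mul_of_nonneg_right (hC _) (abs_nonneg _)
    · exact (hφint.abs.const_mul C)
    · filter_upwards with y
      have h1 : Tendsto (fun ε : ℝ => v + ε • y) (nhdsWithin 0 (Set.Ioi 0)) (nhds v) := by
        have hc : Continuous (fun ε : ℝ => v + ε • y) :=
          continuous_const.add (continuous_id.smul continuous_const)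
        have h0 : Tendsto (fun ε : ℝ => v + ε • y) (nhdsWithin 0 (Set.Ioi 0))
            (nhds (v + (0 : ℝ) • y)) := (hc.tendsto 0).mono_left nhdsWithin_le_nhds
        simpa using h0
      exact (((hκc r hr).tendsto v).comp h1).mul_const (φ y)
  refine Filter.Tendsto.congr' ?_ hlim
  filter_upwards [self_mem_nhdsWithin] with ε hε
  exact (key ε hε).symm
end
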